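/- Let l ≥ 3 be an odd integer. Let ι be the ℂ-algebra automorphism of the Laurent polynomial ring ℂ[x, x⁻¹] determined by ι(x) = x⁻¹ (induced by negation on ℤ in AddMonoidAlgebra ℂ ℤ), let A be the subalgebra of ι-invariant Laurent polynomials, and let I be the ideal of A generated by x^l + x^{-l} - 2. Then the quotient ℂ-algebra A/I has dimension l over ℂ, and is isomorphic as a ℂ-algebra to the product ℂ × (ℂ[X]/(X²))^{(l-1)/2}, i.e. the product of one copy of ℂ with (l-1)/2 copies of the dual numbers over ℂ. -/

import Mathlib

set_option synthInstance.maxHeartbeats 1000000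
set_option maxHeartbeats 1000000
open LaurentPolynomial

/-- The algebra automorphism `ι` of `ℂ[x, x⁻¹]` with `ι(x) = x⁻¹`, induced by
negation on `ℤ` in `AddMonoidAlgebra ℂ ℤ`. -/
noncomputable def laurentInv : LaurentPolynomial ℂ ≃ₐ[ℂ] LaurentPolynomial ℂ :=
  AddMonoidAlgebra.domCongr ℂ ℂ (AddEquiv.neg ℤ)

/-- The subalgebra `A = ℂ[x + x⁻¹]` of `ι`-invariant Laurent polynomials. -/
noncomputable def symmLaurent : Subalgebra ℂ (LaurentPolynomial ℂ) :=
  AlgHom.equalizer laurentInv.toAlgHom (AlgHom.id ℂ (LaurentPolynomial ℂ))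

/-- The ideal of `A` generated by `x^l + x^{-l} - 2`. -/
noncomputable def steinbergIdeal (l : ℕ) : Ideal symmLaurent :=
  Ideal.span {a : symmLaurent |
    (a : LaurentPolynomial ℂ) = T (l : ℤ) + T (-(l : ℤ)) - 2}

/-! Sending `X` to `x + x⁻¹` identifies `ℂ[X]` with the `ι`-invariant Laurent polynomials
(injective because every complex number is `t + t⁻¹` for some `t ≠ 0`; onto because `f = ½ (f + ι f)`
for invariant `f`, and `x ^ n + x ^ (-n)` is a Dickson polynomial in `x + x⁻¹`).
Since `x + x⁻¹ - (z + z⁻¹) = x⁻¹ (x - z) (x - z⁻¹)`, for a primitive `l`-th root of unity `ζ` the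
generator `x ^ l + x ^ (-l) - 2 = x ^ (-l) (x ^ l - 1) ^ 2` is the image of
`∏ j < l, (X - (ζ ^ j + ζ⁻¹ ^ j)) = (X - 2) ∏ 1 ≤ k ≤ (l - 1) / 2, (X - (ζ ^ k + ζ⁻¹ ^ k)) ^ 2`,
whose roots `2, ζ ^ k + ζ⁻¹ ^ k` are pairwise distinct. The Chinese remainder theorem splits the
quotient into `ℂ[X] ⧸ (X - 2) ≅ ℂ` and the factors `ℂ[X] ⧸ (X - c) ^ 2 ≅ ℂ[ε]`. -/

open Function
open scoped Polynomial

section ChineseRemainder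

variable {K R : Type*} [CommSemiring K] [CommRing R] [Algebra K R]

noncomputable def Ideal.quotientSpanMulAlgEquivProd {p q : R} (h : IsCoprime p q) :
    (R ⧸ Ideal.span {p * q}) ≃ₐ[K] (R ⧸ Ideal.span {p}) × (R ⧸ Ideal.span {q}) :=
  AlgEquiv.ofRingEquiv
    (f := (Ideal.quotEquivOfEq (Ideal.span_singleton_mul_span_singleton p q).symm).trans
      (Ideal.quotientMulEquivQuotientProd _ _ ((Ideal.isCoprime_span_singleton_iff p q).2 h)))
    fun _ => rfl

noncomputable def Ideal.quotientSpanProdAlgEquivPi {ι : Type*} [Fintype ι] {q : ι → R}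
    (h : Pairwise (IsCoprime on q)) :
    (R ⧸ Ideal.span {∏ i, q i}) ≃ₐ[K] ∀ i, R ⧸ Ideal.span {q i} :=
  AlgEquiv.ofRingEquiv
    (f := (Ideal.quotEquivOfEq (Ideal.iInf_span_singleton h).symm).trans
      (Ideal.quotientInfRingEquivPiQuotient _ fun _ _ hij =>
        (Ideal.isCoprime_span_singleton_iff _ _).2 (h hij)))
    fun _ => rfl

end ChineseRemainder

namespace Polynomial

variable {K : Type*}

noncomputable def quotientSpanXSubCSqAlgEquiv [CommRing K] (a : K) :
    (K[X] ⧸ Ideal.span {(X - C a) ^ 2}) ≃ₐ[K] DualNumber K :=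
  AlgEquiv.ofAlgHom
    (Ideal.Quotient.liftₐ _ (aeval (algebraMap K _ a + DualNumber.eps)) fun p hp => by
      obtain ⟨q, rfl⟩ := Ideal.mem_span_singleton'.1 hp
      simp [DualNumber.eps_mul_eps, sq])
    (DualNumber.lift ⟨(Algebra.ofId K _, Ideal.Quotient.mkₐ K _ (X - C a)),
      by rw [← map_mul, ← sq, Ideal.Quotient.mkₐ_eq_mk, Ideal.Quotient.eq_zero_iff_mem]
         exact Ideal.mem_span_singleton_self _,
      fun _ => Commute.all _ _⟩)
    (DualNumber.algHom_ext (by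
      rw [AlgHom.comp_apply, DualNumber.lift_apply_eps, ← AlgHom.comp_apply,
        Ideal.Quotient.liftₐ_comp]
      simp))
    (Ideal.Quotient.algHom_ext _ (Polynomial.algHom_ext (by
      rw [AlgHom.comp_assoc, Ideal.Quotient.liftₐ_comp, AlgHom.comp_apply, aeval_X, map_add,
        AlgHom.commutes, DualNumber.lift_apply_eps, ← (Ideal.Quotient.mkₐ K _).commutes,
        ← map_add, Polynomial.algebraMap_eq, add_sub_cancel]
      rfl)))

noncomputable def quotientSpanXSubCMulProdSqAlgEquiv [Field K] {ι : Type*} [Fintype ι]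
    {a : K} {b : ι → K} (hb : Injective b) (hab : ∀ i, b i ≠ a) :
    (K[X] ⧸ Ideal.span {(X - C a) * ∏ i, (X - C (b i)) ^ 2}) ≃ₐ[K] K × (ι → DualNumber K) :=
  (Ideal.quotientSpanMulAlgEquivProd
      (IsCoprime.prod_right fun i _ => (isCoprime_X_sub_C_of_isUnit_sub
        (sub_ne_zero.2 (hab i).symm).isUnit).pow_right)).trans
    (AlgEquiv.prodCongr (quotientSpanXSubCAlgEquiv a)
      ((Ideal.quotientSpanProdAlgEquivPi fun _ _ hij => (isCoprime_X_sub_C_of_isUnit_sub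
        (sub_ne_zero.2 (hb.ne hij)).isUnit).pow).trans
        (AlgEquiv.piCongrRight fun i => quotientSpanXSubCSqAlgEquiv (b i))))

end Polynomial

theorem finrank_prod_pi_dualNumber (K ι : Type*) [Field K] [Fintype ι] :
    Module.finrank K (K × (ι → DualNumber K)) = 1 + Fintype.card ι * 2 := by
  show Module.finrank K (K × (ι → K × K)) = _
  simp [Module.finrank_pi_fintype]

open Polynomial hiding C C_eq_algebraMap

theorem Complex.exists_ne_zero_add_inv_eq (c : ℂ) : ∃ t : ℂ, t ≠ 0 ∧ t + t⁻¹ = c := by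
  obtain ⟨s, hs⟩ := IsAlgClosed.exists_eq_mul_self (c ^ 2 - 4)
  have hprod : (c + s) / 2 * (c - (c + s) / 2) = 1 := by linear_combination hs / 4
  refine ⟨(c + s) / 2, left_ne_zero_of_mul_eq_one hprod, ?_⟩
  rw [inv_eq_of_mul_eq_one_right hprod]
  ring

namespace LaurentPolynomial

variable {R : Type*} [CommRing R]

theorem eval₂_aeval (x : Rˣ) (y : R[T;T⁻¹]) (p : R[X]) :
    eval₂ (RingHom.id R) x (aeval y p) = p.eval (eval₂ (RingHom.id R) x y) := by
  rw [aeval_def, hom_eval₂]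
  congr 1
  ext r
  simp [eval₂_C]

theorem aeval_T_add_T_neg_dickson (n : ℕ) :
    aeval (T 1 + T (-1) : R[T;T⁻¹]) (dickson 1 (1 : R) n) = T n + T (-n) := by
  rw [aeval_def, eval₂_eq_eval_map, map_dickson, map_one,
    dickson_one_one_eval_add_inv _ _ (by rw [← T_add, add_neg_cancel, T_zero]), T_pow, T_pow]
  simp

theorem T_add_T_neg_mem_range (n : ℤ) :
    T n + T (-n) ∈ (aeval (R := R) (T 1 + T (-1) : R[T;T⁻¹])).range := by
  obtain ⟨k, rfl | rfl⟩ := Int.eq_nat_or_neg n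
  · exact ⟨_, aeval_T_add_T_neg_dickson k⟩
  · exact ⟨_, (aeval_T_add_T_neg_dickson k).trans (by rw [neg_neg, add_comm])⟩

theorem add_invert_mem_range (f : R[T;T⁻¹]) :
    f + invert f ∈ (aeval (R := R) (T 1 + T (-1) : R[T;T⁻¹])).range := by
  induction f using LaurentPolynomial.induction_on' with
  | add p q hp hq => simpa [add_add_add_comm] using add_mem hp hq
  | C_mul_T n a =>
    have h := Subalgebra.smul_mem _ (T_add_T_neg_mem_range (R := R) n) a
    rwa [map_mul, invert_C, invert_T, ← mul_add, ← smul_eq_C_mul]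

theorem invert_aeval_T_add_T_neg (p : R[X]) :
    invert (aeval (T 1 + T (-1) : R[T;T⁻¹]) p) = aeval (T 1 + T (-1) : R[T;T⁻¹]) p := by
  rw [← invert.coe_toAlgHom, ← aeval_algHom_apply, AlgEquiv.coe_toAlgHom, map_add, invert_T,
    invert_T, neg_neg, add_comm]

theorem mem_range_aeval_T_add_T_neg_of_invert_eq [Invertible (2 : R)] {f : R[T;T⁻¹]}
    (hf : invert f = f) : f ∈ (aeval (R := R) (T 1 + T (-1) : R[T;T⁻¹])).range := by
  have h := Subalgebra.smul_mem _ (add_invert_mem_range f) (⅟2 : R)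
  rwa [hf, ← two_smul R f, smul_smul, invOf_mul_self, one_smul] at h

end LaurentPolynomial

theorem aeval_T_add_T_neg_injective : Injective (aeval (R := ℂ) (T 1 + T (-1) : ℂ[T;T⁻¹])) := by
  refine (injective_iff_map_eq_zero _).2 fun p hp => Polynomial.funext fun c => ?_
  obtain ⟨t, ht, rfl⟩ := Complex.exists_ne_zero_add_inv_eq c
  have h := congrArg (LaurentPolynomial.eval₂ (RingHom.id ℂ) (Units.mk0 t ht)) hp
  rw [eval₂_aeval, map_add, eval₂_T, eval₂_T, map_zero] at h
  simpa using h

theorem range_aeval_T_add_T_neg :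
    (aeval (R := ℂ) (T 1 + T (-1) : ℂ[T;T⁻¹])).range = symmLaurent := by
  refine le_antisymm ?_ fun f hf => mem_range_aeval_T_add_T_neg_of_invert_eq hf
  rintro _ ⟨p, rfl⟩
  exact invert_aeval_T_add_T_neg p

noncomputable def symmLaurentEquiv : ℂ[X] ≃ₐ[ℂ] symmLaurent :=
  (AlgEquiv.ofInjective _ aeval_T_add_T_neg_injective).trans
    (Subalgebra.equivOfEq _ _ range_aeval_T_add_T_neg)

theorem steinbergIdeal_eq_map_span {l : ℕ} {p : ℂ[X]}
    (hp : aeval (T 1 + T (-1) : ℂ[T;T⁻¹]) p = T l + T (-l) - 2) :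
    steinbergIdeal l = (Ideal.span {p}).map (symmLaurentEquiv : ℂ[X] →+* symmLaurent) := by
  rw [Ideal.map_span, Set.image_singleton, steinbergIdeal]
  congr 1
  ext a
  exact ⟨fun ha => Subtype.ext (ha.trans hp.symm), by rintro rfl; exact hp⟩

open Finset

theorem add_sub_add_eq_mul_sub_mul_sub {R : Type*} [CommRing R] {u v z w : R} (huv : u * v = 1)
    (hzw : z * w = 1) : u + v - (z + w) = v * ((u - z) * (u - w)) := by
  linear_combination (z + w - u) * huv - v * hzw

theorem Finset.prod_range_two_mul_add_one_of_symm {M : Type*} [CommMonoid M] (m : ℕ) (f : ℕ → M)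
    (hf : ∀ j ≤ 2 * m + 1, f (2 * m + 1 - j) = f j) :
    ∏ j ∈ range (2 * m + 1), f j = f 0 * ∏ j ∈ range m, f (j + 1) ^ 2 := by
  rw [prod_range_succ', mul_comm, two_mul, prod_range_add,
    ← prod_range_reflect (fun j => f (m + j + 1)) m, ← prod_mul_distrib]
  congr 1
  refine prod_congr rfl fun j hj => ?_
  rw [mem_range] at hj
  rw [sq, ← hf (j + 1) (by omega)]
  congr 2
  omega

theorem pow_sub_add_inv_pow_sub {K : Type*} [Field K] {ζ : K} {n j : ℕ} (hζ0 : ζ ≠ 0)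
    (hζ : ζ ^ n = 1) (hj : j ≤ n) : ζ ^ (n - j) + ζ⁻¹ ^ (n - j) = ζ ^ j + ζ⁻¹ ^ j := by
  rw [pow_sub₀ _ hζ0 hj, pow_sub₀ _ (inv_ne_zero hζ0) hj, inv_pow ζ n, hζ]
  simp [inv_pow, add_comm]

namespace IsPrimitiveRoot

variable {K : Type*} [Field K] {ζ : K}

theorem prod_range_T_sub {n : ℕ} (hζ : IsPrimitiveRoot ζ n) (hn : 0 < n) :
    ∏ j ∈ range n, (T 1 - C (ζ ^ j) : K[T;T⁻¹]) = T n - 1 := by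
  have h := congrArg (aeval (T 1 : K[T;T⁻¹])) (X_pow_sub_C_eq_prod hζ hn (one_pow n))
  simp only [map_sub, map_pow, map_prod, aeval_X, Polynomial.aeval_C, map_one, mul_one, T_pow] at h
  simp only [C_eq_algebraMap, map_pow, h]

theorem aeval_prod_X_sub_C_pow_add_inv_pow {n : ℕ} (hζ : IsPrimitiveRoot ζ n) (hn : 0 < n) :
    aeval (T 1 + T (-1) : K[T;T⁻¹]) (∏ j ∈ range n, (X - Polynomial.C (ζ ^ j + ζ⁻¹ ^ j))) =
      T n + T (-n) - 2 := by
  have hfactor (j : ℕ) : aeval (T 1 + T (-1) : K[T;T⁻¹]) (X - Polynomial.C (ζ ^ j + ζ⁻¹ ^ j)) =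
      T (-1) * ((T 1 - C (ζ ^ j)) * (T 1 - C (ζ⁻¹ ^ j))) := by
    rw [map_sub, aeval_X, aeval_C, ← C_eq_algebraMap, map_add]
    refine add_sub_add_eq_mul_sub_mul_sub (by rw [← T_add]; simp) ?_
    rw [← map_mul, ← mul_pow, mul_inv_cancel₀ (hζ.ne_zero hn.ne'), one_pow, map_one]
  have hT : (T n * T (-n) : K[T;T⁻¹]) = 1 := by rw [← T_add]; simp
  rw [map_prod, prod_congr rfl fun j _ => hfactor j, prod_mul_distrib, prod_mul_distrib,
    prod_const, card_range, hζ.prod_range_T_sub hn, hζ.inv.prod_range_T_sub hn, T_pow,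
    mul_neg_one]
  linear_combination (T n - 2) * hT

theorem injOn_pow_add_inv_pow {m : ℕ} (hζ : IsPrimitiveRoot ζ (2 * m + 1)) :
    Set.InjOn (fun j => ζ ^ j + ζ⁻¹ ^ j) (Set.Iic m) := by
  intro i hi j hj h
  simp only [Set.mem_Iic] at hi hj h
  have hζ0 := hζ.ne_zero (by omega)
  have hi' : ζ ^ i * ζ⁻¹ ^ i = 1 := by rw [← mul_pow, mul_inv_cancel₀ hζ0, one_pow]
  have hj' : ζ ^ j * ζ⁻¹ ^ j = 1 := by rw [← mul_pow, mul_inv_cancel₀ hζ0, one_pow]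
  have key : (ζ ^ i - ζ ^ j) * (ζ ^ (i + j) - 1) = 0 := by
    rw [pow_add]
    linear_combination (ζ ^ i * ζ ^ j) * h - ζ ^ j * hi' + ζ ^ i * hj'
  rcases mul_eq_zero.1 key with h1 | h1
  · exact hζ.pow_inj (by omega) (by omega) (sub_eq_zero.1 h1)
  · have := Nat.eq_zero_of_dvd_of_lt (hζ.dvd_of_pow_eq_one _ (sub_eq_zero.1 h1)) (by omega)
    omega

end IsPrimitiveRoot

theorem nonempty_quotient_steinbergIdeal_algEquiv (m : ℕ) :
    Nonempty ((symmLaurent ⧸ steinbergIdeal (2 * m + 1)) ≃ₐ[ℂ] ℂ × (Fin m → DualNumber ℂ)) := by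
  obtain ⟨ζ, hζ⟩ : ∃ ζ : ℂ, IsPrimitiveRoot ζ (2 * m + 1) :=
    ⟨_, Complex.isPrimitiveRoot_exp _ (by omega)⟩
  set c : ℕ → ℂ := fun j => ζ ^ j + ζ⁻¹ ^ j
  have hP : ∏ j ∈ range (2 * m + 1), (X - Polynomial.C (c j)) =
      (X - Polynomial.C (c 0)) * ∏ k : Fin m, (X - Polynomial.C (c (k + 1))) ^ 2 := by
    rw [prod_range_two_mul_add_one_of_symm m _ fun j hj =>
      congrArg (fun x => X - Polynomial.C x)
        (pow_sub_add_inv_pow_sub (hζ.ne_zero (by omega)) hζ.pow_eq_one hj),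
      Fin.prod_univ_eq_prod_range (fun k => (X - Polynomial.C (c (k + 1))) ^ 2)]
  have hb : Injective fun k : Fin m => c (k + 1) := fun i j h =>
    Fin.ext (Nat.succ_injective (hζ.injOn_pow_add_inv_pow (by simp) (by simp) h))
  have hab (k : Fin m) : c (k + 1) ≠ c 0 := fun h =>
    k.val.succ_ne_zero (hζ.injOn_pow_add_inv_pow (by simp) (by simp) h)
  exact ⟨(Ideal.quotientEquivAlg _ _ symmLaurentEquiv (steinbergIdeal_eq_map_span
    (hζ.aeval_prod_X_sub_C_pow_add_inv_pow (by omega)))).symm.trans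
    ((Ideal.quotientEquivAlgOfEq ℂ (congrArg (fun p => Ideal.span {p}) hP)).trans
      (quotientSpanXSubCMulProdSqAlgEquiv hb hab))⟩

theorem sl2_grothendieck_ring_structure_general (l : ℕ) (hl : Odd l) :
    Module.finrank ℂ (symmLaurent ⧸ steinbergIdeal l) = l ∧
    Nonempty ((symmLaurent ⧸ steinbergIdeal l) ≃ₐ[ℂ]
      ℂ × (Fin ((l - 1) / 2) → DualNumber ℂ)) := by
  obtain ⟨m, rfl⟩ := hl
  obtain ⟨e⟩ := nonempty_quotient_steinbergIdeal_algEquiv m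
  rw [show (2 * m + 1 - 1) / 2 = m by omega]
  refine ⟨?_, ⟨e⟩⟩
  rw [e.toLinearEquiv.finrank_eq, finrank_prod_pi_dualNumber, Fintype.card_fin]
  ring

/-- **Section 7.1 (structure of 𝔑 ≅ 𝔷̃ for sl₂)**: for odd `l ≥ 3`, the quotient of
the algebra of `ι`-invariant Laurent polynomials `ℂ[x + x⁻¹]` by the ideal
generated by `x^l + x^{-l} - 2` has dimension `l` over `ℂ` and is isomorphic as a
`ℂ`-algebra to `ℂ × (ℂ[ε]/(ε²))^{(l-1)/2}`, i.e. one copy of `ℂ` (the Steinberg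
block) and `(l-1)/2` copies of the dual numbers (the regular blocks). -/
theorem sl2_grothendieck_ring_structure (l : ℕ) (hl : Odd l) (hl3 : 3 ≤ l) :
    Module.finrank ℂ (symmLaurent ⧸ steinbergIdeal l) = l ∧
    Nonempty ((symmLaurent ⧸ steinbergIdeal l) ≃ₐ[ℂ]
      ℂ × (Fin ((l - 1) / 2) → DualNumber ℂ)) :=
  sl2_grothendieck_ring_structure_general l hl
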